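/- For N = 4 and parameters p_0,p_1,p_2 ∈ (0,1) with q_m = 1 − p_m, the lumped game-B transition matrix on the six dihedral orbit classes (ordered {0000}, {0001,…}, {0011,0110,1001,1100}, {0101,1010}, {0111,…}, {1111}) equals (1/4) times the matrix with rows (4q_0, 4p_0, 0, 0, 0, 0), (q_0, p_0+q_0+2q_1, 2p_1, p_0, 0, 0), (0, 2q_1, 2(p_1+q_1), 0, 2p_1, 0), (0, 2q_0, 0, 2(p_0+q_2), 2p_2, 0), (0, 0, 2q_1, q_2, 2p_1+p_2+q_2, p_2), (0, 0, 0, 0, 4q_2, 4p_2). -/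

import Mathlib

open Finset

/-- `m_i(x) = x_{i-1} + x_{i+1}` (cyclic indices). -/
def nbrWinners (x : ZMod 4 → Bool) (i : ZMod 4) : ℕ :=
  (if x (i - 1) then 1 else 0) + (if x (i + 1) then 1 else 0)

/-- The game-B transition matrix on `{0,1}^4`: a player `i` is chosen with probability
`1/4`; if `x_i = 0` he flips to `1` with probability `p_{m_i(x)}`, and if `x_i = 1` he
flips to `0` with probability `q_{m_i(x)} = 1 - p_{m_i(x)}`; otherwise the state is
unchanged. -/
noncomputable def gameB4 (p : ℕ → ℝ) (x y : ZMod 4 → Bool) : ℝ :=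
  (1 / 4) * ∑ i : ZMod 4,
      (if y = Function.update x i (!x i) then
        (if x i then 1 - p (nbrWinners x i) else p (nbrWinners x i)) else 0)
    + (if y = x then
        (1 / 4) * ∑ i : ZMod 4,
          (if x i then p (nbrWinners x i) else 1 - p (nbrWinners x i))
      else 0)

/-- The state `(x_1, x_2, x_3, x_4) ∈ {0,1}^4` (player 4 corresponding to `0 ∈ ZMod 4`). -/
def st (a b c d : Bool) : ZMod 4 → Bool :=
  fun i => if i = 1 then a else if i = 2 then b else if i = 3 then c else d

/-- The dihedral group of order 8 acting on the circle `ZMod 4`. -/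
def dihedral4 : Subgroup (Equiv.Perm (ZMod 4)) :=
  Subgroup.closure {Equiv.addLeft 1, (Equiv.neg (ZMod 4)).trans (Equiv.addLeft 1)}

/-- Representatives of the six dihedral orbit classes, ordered as
`{0000}`, `{0001,…}`, `{0011,0110,1001,1100}`, `{0101,1010}`, `{0111,…}`, `{1111}`. -/
def reps : Fin 6 → (ZMod 4 → Bool) :=
  ![st false false false false, st false false false true, st false false true true,
    st false true false true, st false true true true, st true true true true]

/-!
The dihedral group preserves the cycle structure of `ZMod 4`, so it maps the neighbour count
`m_i(x)` of player `i` to that of player `σ i`; hence game B is equivariant,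
`P_B(x ∘ σ, y ∘ σ) = P_B(x, y)`, and the mass that `P_B(x, ·)` puts on an orbit depends only on
the orbit of `x`. The orbits are told apart by the number of ones and, for two ones, by whether
they sit on opposite sites. For each of the six representatives, the mass on an orbit is `1/4`
times the sum of the flip probabilities of the players whose flip lands in that orbit, plus the
holding probability if the representative lies in it.
-/

open Equiv

theorem dihedral4_induction {motive : Perm (ZMod 4) → Prop}
    (rotate : motive (Equiv.addLeft 1))
    (reflect : motive ((Equiv.neg (ZMod 4)).trans (Equiv.addLeft 1)))
    (one : motive 1) (mul : ∀ σ τ, motive σ → motive τ → motive (σ * τ))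
    {σ : Perm (ZMod 4)} (hσ : σ ∈ dihedral4) : motive σ := by
  rw [← Subgroup.mem_toSubmonoid, dihedral4, Subgroup.closure_toSubmonoid_of_finite] at hσ
  induction hσ using Submonoid.closure_induction with
  | mem τ hτ => rcases hτ with rfl | rfl <;> assumption
  | one => exact one
  | mul σ τ _ _ hσ hτ => exact mul σ τ hσ hτ

theorem nbrWinners_comp {σ : Perm (ZMod 4)} (hσ : σ ∈ dihedral4) (x : ZMod 4 → Bool) :
    nbrWinners (x ∘ σ) = nbrWinners x ∘ σ := by
  refine dihedral4_induction (motive := fun σ => ∀ x, nbrWinners (x ∘ σ) = nbrWinners x ∘ σ)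
    (by decide) (by decide) (fun _ => rfl) (fun σ τ hσ hτ x => ?_) hσ x
  rw [Perm.coe_mul, ← Function.comp_assoc, hτ, hσ]
  rfl

def numWinners (x : ZMod 4 → Bool) : ℕ :=
  (x 0).toNat + (x 1).toNat + (x 2).toNat + (x 3).toNat

def orbitClass (x : ZMod 4 → Bool) : Fin 6 :=
  if numWinners x = 0 then 0 else if numWinners x = 1 then 1 else
  if numWinners x = 2 then (if x 0 = x 2 then 3 else 2) else
  if numWinners x = 3 then 4 else 5

theorem orbitClass_comp {σ : Perm (ZMod 4)} (hσ : σ ∈ dihedral4) (x : ZMod 4 → Bool) :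
    orbitClass (x ∘ σ) = orbitClass x := by
  refine dihedral4_induction (motive := fun σ => ∀ x, orbitClass (x ∘ σ) = orbitClass x)
    (by decide) (by decide) (fun _ => rfl) (fun σ τ hσ hτ x => ?_) hσ x
  rw [Perm.coe_mul, ← Function.comp_assoc, hτ, hσ]

theorem orbitClass_reps (k : Fin 6) : orbitClass (reps k) = k := by
  revert k
  decide

theorem exists_eq_reps_orbitClass_comp (x : ZMod 4 → Bool) : ∃ j : Fin 4, ∃ b : Bool,
    x = reps (orbitClass x) ∘ ⇑(Equiv.addLeft (1 : ZMod 4) ^ (j : ℕ) *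
      if b then (Equiv.neg (ZMod 4)).trans (Equiv.addLeft 1) else 1) := by
  revert x
  decide

theorem exists_mem_dihedral4_eq_reps_comp_iff (l : Fin 6) (y : ZMod 4 → Bool) :
    (∃ σ ∈ dihedral4, y = reps l ∘ σ) ↔ orbitClass y = l := by
  constructor
  · rintro ⟨σ, hσ, rfl⟩
    rw [orbitClass_comp hσ, orbitClass_reps]
  · rintro rfl
    obtain ⟨j, b, hy⟩ := exists_eq_reps_orbitClass_comp y
    refine ⟨_, mul_mem (pow_mem (Subgroup.subset_closure (.inl rfl)) _) ?_, hy⟩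
    cases b
    · exact one_mem _
    · exact Subgroup.subset_closure (.inr rfl)

theorem gameB4_comp {σ : Perm (ZMod 4)} (hσ : σ ∈ dihedral4) (p : ℕ → ℝ)
    (x y : ZMod 4 → Bool) : gameB4 p (x ∘ σ) (y ∘ σ) = gameB4 p x y := by
  have hinj : Function.Injective fun z : ZMod 4 → Bool => z ∘ σ :=
    σ.surjective.injective_comp_right
  have hflip (i : ZMod 4) : Function.update (x ∘ σ) i (!(x (σ i))) =
      Function.update x (σ i) (!x (σ i)) ∘ σ := by
    rw [Function.update_comp_equiv, Equiv.symm_apply_apply]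
  simp only [gameB4, Function.comp_apply, nbrWinners_comp hσ, hflip, hinj.eq_iff]
  rw [Equiv.sum_comp σ fun j => if y = Function.update x j (!x j) then
      (if x j then 1 - p (nbrWinners x j) else p (nbrWinners x j)) else 0,
    Equiv.sum_comp σ fun j => if x j then p (nbrWinners x j) else 1 - p (nbrWinners x j)]

theorem sum_gameB4_orbitClass_comp {σ : Perm (ZMod 4)} (hσ : σ ∈ dihedral4) (p : ℕ → ℝ)
    (x : ZMod 4 → Bool) (l : Fin 6) :
    ∑ y ∈ univ.filter (orbitClass · = l), gameB4 p (x ∘ σ) y =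
      ∑ y ∈ univ.filter (orbitClass · = l), gameB4 p x y := by
  simp only [sum_filter]
  refine (Fintype.sum_equiv (σ.symm.arrowCongr (Equiv.refl Bool)) _ _ fun y => ?_).symm
  change _ = if orbitClass (y ∘ σ) = l then gameB4 p (x ∘ σ) (y ∘ σ) else 0
  rw [orbitClass_comp hσ, gameB4_comp hσ]

theorem sum_gameB4 (p : ℕ → ℝ) (x : ZMod 4 → Bool) (s : Finset (ZMod 4 → Bool)) :
    ∑ y ∈ s, gameB4 p x y =
      1 / 4 * ∑ i, (if Function.update x i (!x i) ∈ s then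
        (if x i then 1 - p (nbrWinners x i) else p (nbrWinners x i)) else 0) +
      if x ∈ s then 1 / 4 * ∑ i, (if x i then p (nbrWinners x i) else 1 - p (nbrWinners x i))
      else 0 := by
  simp only [gameB4, sum_add_distrib, ← mul_sum]
  rw [sum_comm]
  simp only [sum_ite_eq']

theorem sum_zmod_four {M : Type*} [AddCommMonoid M] (f : ZMod 4 → M) :
    ∑ i, f i = f 0 + f 1 + f 2 + f 3 :=
  Fin.sum_univ_four f

def lumpedGameB4 (p : ℕ → ℝ) : Matrix (Fin 6) (Fin 6) ℝ :=
  !![4 * (1 - p 0), 4 * p 0, 0, 0, 0, 0;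
    1 - p 0, p 0 + (1 - p 0) + 2 * (1 - p 1), 2 * p 1, p 0, 0, 0;
    0, 2 * (1 - p 1), 2 * (p 1 + (1 - p 1)), 0, 2 * p 1, 0;
    0, 2 * (1 - p 0), 0, 2 * (p 0 + (1 - p 2)), 2 * p 2, 0;
    0, 0, 2 * (1 - p 1), 1 - p 2, 2 * p 1 + p 2 + (1 - p 2), p 2;
    0, 0, 0, 0, 4 * (1 - p 2), 4 * p 2]

theorem sum_gameB4_reps (p : ℕ → ℝ) (k l : Fin 6) :
    ∑ y ∈ univ.filter (orbitClass · = l), gameB4 p (reps k) y =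
      1 / 4 * lumpedGameB4 p k l := by
  rw [sum_gameB4]
  simp only [mem_filter, mem_univ, true_and, sum_zmod_four]
  fin_cases k <;> fin_cases l <;> simp +decide [nbrWinners, lumpedGameB4] <;> ring

open scoped Classical in
theorem stmt19_general (p0 p1 p2 : ℝ) :
    let p : ℕ → ℝ := fun m => if m = 0 then p0 else if m = 1 then p1 else p2
    let q0 : ℝ := 1 - p0
    let q1 : ℝ := 1 - p1
    let q2 : ℝ := 1 - p2
    ∀ (k l : Fin 6) (x : ZMod 4 → Bool), (∃ σ ∈ dihedral4, x = reps k ∘ σ) →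
      ∑ y ∈ Finset.univ.filter (fun y => ∃ σ ∈ dihedral4, y = reps l ∘ σ),
        gameB4 p x y =
      (1 / 4) *
        ![![4 * q0, 4 * p0, 0, 0, 0, 0],
          ![q0, p0 + q0 + 2 * q1, 2 * p1, p0, 0, 0],
          ![0, 2 * q1, 2 * (p1 + q1), 0, 2 * p1, 0],
          ![0, 2 * q0, 0, 2 * (p0 + q2), 2 * p2, 0],
          ![0, 0, 2 * q1, q2, 2 * p1 + p2 + q2, p2],
          ![0, 0, 0, 0, 4 * q2, 4 * p2]] k l := by
  intro p q0 q1 q2 k l x ⟨σ, hσ, hx⟩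
  have horbit : univ.filter (fun y => ∃ σ ∈ dihedral4, y = reps l ∘ σ) =
      univ.filter (orbitClass · = l) := by
    ext y
    simp only [mem_filter, mem_univ, true_and, exists_mem_dihedral4_eq_reps_comp_iff]
  rw [horbit, hx, sum_gameB4_orbitClass_comp hσ, sum_gameB4_reps]
  rfl

open scoped Classical in
/-- For `N = 4` and `p_0,p_1,p_2 ∈ (0,1)` with `q_m = 1 - p_m`, the lumped game-B
transition matrix on the six dihedral orbit classes equals `(1/4)` times the matrix with
rows `(4q_0, 4p_0, 0, 0, 0, 0)`, `(q_0, p_0+q_0+2q_1, 2p_1, p_0, 0, 0)`,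
`(0, 2q_1, 2(p_1+q_1), 0, 2p_1, 0)`, `(0, 2q_0, 0, 2(p_0+q_2), 2p_2, 0)`,
`(0, 0, 2q_1, q_2, 2p_1+p_2+q_2, p_2)`, `(0, 0, 0, 0, 4q_2, 4p_2)`. -/
theorem stmt19 (p0 p1 p2 : ℝ) (h0 : 0 < p0 ∧ p0 < 1) (h1 : 0 < p1 ∧ p1 < 1)
    (h2 : 0 < p2 ∧ p2 < 1) :
    let p : ℕ → ℝ := fun m => if m = 0 then p0 else if m = 1 then p1 else p2
    let q0 : ℝ := 1 - p0
    let q1 : ℝ := 1 - p1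
    let q2 : ℝ := 1 - p2
    ∀ (k l : Fin 6) (x : ZMod 4 → Bool), (∃ σ ∈ dihedral4, x = reps k ∘ σ) →
      ∑ y ∈ Finset.univ.filter (fun y => ∃ σ ∈ dihedral4, y = reps l ∘ σ),
        gameB4 p x y =
      (1 / 4) *
        ![![4 * q0, 4 * p0, 0, 0, 0, 0],
          ![q0, p0 + q0 + 2 * q1, 2 * p1, p0, 0, 0],
          ![0, 2 * q1, 2 * (p1 + q1), 0, 2 * p1, 0],
          ![0, 2 * q0, 0, 2 * (p0 + q2), 2 * p2, 0],
          ![0, 0, 2 * q1, q2, 2 * p1 + p2 + q2, p2],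
          ![0, 0, 0, 0, 4 * q2, 4 * p2]] k l :=
  stmt19_general p0 p1 p2
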